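/- arXiv:1411.0590 — 3 statements merged into one kernel-verified Lean document; each statement's English description precedes it below -/
import Mathlib

section
/- Let φ ∈ Φ. If φ has a cycle, then there exists N ≥ 2 such that det(I − M_n(φ)) = 0 for all n ≥ N. -/
/-- The local function `φ_n` on `{0,...,n}`. -/
def localFun (φ : ℕ → ℕ) (n : ℕ) (x : ℕ) : ℕ :=
  if 1 ≤ x ∧ x ≤ n ∧ 1 ≤ φ x ∧ φ x ≤ n then φ x else 0

/-- The matrix `M_n(φ)` whose `j`-th column is `e_{φ_n(j)}`. -/
def Mloc (φ : ℕ → ℕ) (n : ℕ) : Matrix (Fin n) (Fin n) ℤ :=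
  fun i j => if localFun φ n ((j : ℕ) + 1) = (i : ℕ) + 1 then 1 else 0

/-!
For `n` at least the largest point of the cycle `x ↦ φ x ↦ ⋯ ↦ φ^[m] x = x`, the whole cycle lies
in `{1, …, n}` (it cannot pass through `0`, which `φ` fixes), so there `φ_n` agrees with `φ` and
has the same cycle. Since `M_n(φ) e_a = e_{φ_n(a)}`, the vector `∑_{k<m} e_{φ_n^k(x)}` is then a
nonzero fixed vector of `M_n(φ)`, i.e. a kernel vector of `1 - M_n(φ)`.
-/

open Function Matrix Finset

theorem Function.IsPeriodicPt.iterate_ne_of_isFixedPt {α : Type*} {f : α → α} {x a : α} {m : ℕ}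
    (hx : IsPeriodicPt f m x) (hm : 0 < m) (ha : IsFixedPt f a) (hxa : x ≠ a) (k : ℕ) :
    f^[k] x ≠ a := by
  intro hk
  apply hxa
  calc x = f^[m * k] x := ((hx.mul_const k).eq).symm
    _ = f^[m * k - k] (f^[k] x) := by
      rw [← iterate_add_apply, Nat.sub_add_cancel (Nat.le_mul_of_pos_left k hm)]
    _ = a := by rw [hk, ha.iterate]

theorem Function.IsPeriodicPt.iterate_le_sup {f : ℕ → ℕ} {x m : ℕ}
    (hx : IsPeriodicPt f m x) (hm : 0 < m) (k : ℕ) :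
    f^[k] x ≤ (range m).sup (f^[·] x) := by
  rw [← hx.iterate_mod_apply]
  exact le_sup (f := (f^[·] x)) (mem_range.mpr (Nat.mod_lt k hm))

theorem localFun_eq_of_mem {φ : ℕ → ℕ} {n a : ℕ} (ha : 1 ≤ a ∧ a ≤ n) (hφa : 1 ≤ φ a ∧ φ a ≤ n) :
    localFun φ n a = φ a :=
  if_pos ⟨ha.1, ha.2, hφa⟩

theorem iterate_localFun_eq_iterate {φ : ℕ → ℕ} {n x : ℕ}
    (horb : ∀ k, 1 ≤ φ^[k] x ∧ φ^[k] x ≤ n) (k : ℕ) :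
    (localFun φ n)^[k] x = φ^[k] x := by
  induction k with
  | zero => rfl
  | succ k ih =>
    rw [iterate_succ_apply', iterate_succ_apply', ih,
      localFun_eq_of_mem (horb k) (iterate_succ_apply' φ k x ▸ horb (k + 1))]

/-- `e_a ∈ ℤⁿ`, indexed from `1` as in `Mloc`; it is `0` unless `1 ≤ a ≤ n`, matching the zero
columns of `M_n(φ)`, where `φ_n(j) = 0`. -/
def unitVec (n a : ℕ) : Fin n → ℤ := fun i => if a = (i : ℕ) + 1 then 1 else 0

theorem unitVec_nonneg (n a : ℕ) (i : Fin n) : 0 ≤ unitVec n a i := by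
  unfold unitVec; split_ifs <;> norm_num

theorem unitVec_of_mem {n a : ℕ} (ha : 1 ≤ a ∧ a ≤ n) :
    unitVec n a = Pi.single ⟨a - 1, by omega⟩ 1 := by
  ext i
  simp only [unitVec, Pi.single_apply, Fin.ext_iff]
  exact if_congr (by omega) rfl rfl

theorem unitVec_of_not_mem {n a : ℕ} (ha : ¬(1 ≤ a ∧ a ≤ n)) : unitVec n a = 0 := by
  ext i
  simp only [unitVec, Pi.zero_apply, ite_eq_right_iff]
  omega

theorem Mloc_mulVec_unitVec (φ : ℕ → ℕ) (n a : ℕ) :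
    Mloc φ n *ᵥ unitVec n a = unitVec n (localFun φ n a) := by
  by_cases ha : 1 ≤ a ∧ a ≤ n
  · rw [unitVec_of_mem ha, mulVec_single_one]
    ext i
    simp [Mloc, unitVec, Nat.sub_add_cancel ha.1]
  · have : localFun φ n a = 0 := if_neg (by omega)
    rw [unitVec_of_not_mem ha, this, unitVec_of_not_mem (by omega), mulVec_zero]

theorem det_one_sub_Mloc_eq_zero_of_isPeriodicPt {φ : ℕ → ℕ} {n x m : ℕ}
    (hx : 1 ≤ x ∧ x ≤ n) (hm : 0 < m) (hper : IsPeriodicPt (localFun φ n) m x) :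
    (1 - Mloc φ n).det = 0 := by
  set ψ := localFun φ n
  let v : Fin n → ℤ := ∑ k ∈ range m, unitVec n (ψ^[k] x)
  have hfix : Mloc φ n *ᵥ v = v := by
    calc Mloc φ n *ᵥ v = ∑ k ∈ range m, unitVec n (ψ^[k + 1] x) := by
          simp only [v, mulVec_sum, Mloc_mulVec_unitVec, iterate_succ_apply', ψ]
      _ = v := by
          have := sum_range_succ' (fun k => unitVec n (ψ^[k] x)) m
          rw [sum_range_succ, hper.eq, iterate_zero_apply] at this
          exact add_right_cancel this.symm
  have hv : v ≠ 0 := by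
    intro h0
    have hle := single_le_sum (fun k _ => unitVec_nonneg n (ψ^[k] x) ⟨x - 1, by omega⟩)
      (mem_range.mpr hm)
    rw [← Finset.sum_apply] at hle
    change _ ≤ v _ at hle
    rw [h0] at hle
    simp [unitVec, Nat.sub_add_cancel hx.1] at hle
  rw [← exists_mulVec_eq_zero_iff]
  exact ⟨v, hv, by rw [sub_mulVec, one_mulVec, hfix, sub_self]⟩

theorem stmt14_general (φ : ℕ → ℕ) (hφ0 : φ 0 = 0)
    (x m : ℕ) (hx : 1 ≤ x) (hm : 2 ≤ m) (hcyc : φ^[m] x = x) :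
    ∃ N, 2 ≤ N ∧ ∀ n, N ≤ n → (1 - Mloc φ n).det = 0 := by
  have hper : IsPeriodicPt φ m x := hcyc
  refine ⟨max 2 ((range m).sup (φ^[·] x)), le_max_left _ _, fun n hn => ?_⟩
  have horb (k : ℕ) : 1 ≤ φ^[k] x ∧ φ^[k] x ≤ n :=
    ⟨Nat.one_le_iff_ne_zero.mpr (hper.iterate_ne_of_isFixedPt (by omega) hφ0 (by omega) k),
      (hper.iterate_le_sup (by omega) k).trans (le_of_max_le_right hn)⟩
  refine det_one_sub_Mloc_eq_zero_of_isPeriodicPt (horb 0) (by omega : 0 < m) ?_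
  show (localFun φ n)^[m] x = x
  rw [iterate_localFun_eq_iterate horb, hcyc]

theorem stmt14 (φ : ℕ → ℕ) (hφ0 : φ 0 = 0) (hfix : ∀ x, 1 ≤ x → φ x ≠ x)
    (x m : ℕ) (hx : 1 ≤ x) (hm : 2 ≤ m) (hcyc : φ^[m] x = x) :
    ∃ N, 2 ≤ N ∧ ∀ n, N ≤ n → (1 - Mloc φ n).det = 0 :=
  stmt14_general φ hφ0 x m hx hm hcyc
end

section
/- Let φ ∈ Φ, n ≥ 2, with φ_n having no cycle. Then the number of nonzero entries of (I − M_n(φ))^{-1} equals ∑_{x=1}^n h(x), where h(x) is the height of x under φ_n, and this quantity is at most binom(n+1, 2) = n(n+1)/2. -/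
/-- The height of `x` under `f`: least `k ≥ 1` with `f^[k] x = 0`. -/
noncomputable def hgt (f : ℕ → ℕ) (x : ℕ) : ℕ := sInf {k | 1 ≤ k ∧ f^[k] x = 0}

/-!
Write `f = φ_n`. Its values lie in `{0, …, n}`, `0` is fixed, and the absence of cycles says
that `0` is its only periodic point. The `1`s of `M_n(φ)^k` sit at `(f^k(j), j)`, and `M_n(φ)^n = 0`,
so `(I - M_n(φ))⁻¹ = ∑_{k<n} M_n(φ)^k` is supported on the pairs `(i, j)` with `i` on the forward
orbit of `j`. Before reaching `0` that orbit cannot revisit a point, so column `j` of the support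
has exactly `h(j)` entries. For the bound, reachability is antisymmetric (again by aperiodicity),
so the support meets its transpose only on the diagonal and has at most `(n² + n) / 2` elements.
-/

open Function Finset

theorem Fin.sum_univ_add_one_eq_sum_Icc {M : Type*} [AddCommMonoid M] (n : ℕ) (g : ℕ → M) :
    ∑ i : Fin n, g (i + 1) = ∑ x ∈ Icc 1 n, g x := by
  rw [Fin.sum_univ_eq_sum_range (fun i => g (i + 1)), range_eq_Ico, sum_Ico_add',
    zero_add, Ico_add_one_right_eq_Icc]

theorem Fin.card_filter_add_one_eq (n : ℕ) (p : ℕ → Prop) [DecidablePred p] :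
    #{i : Fin n | p (i + 1)} = #{x ∈ Icc 1 n | p x} := by
  simp only [card_filter]
  exact Fin.sum_univ_add_one_eq_sum_Icc n (fun x => if p x then 1 else 0)

theorem card_le_of_antisymm {α : Type*} [Fintype α] [DecidableEq α] (s : Finset (α × α))
    (hs : ∀ a b, (a, b) ∈ s → (b, a) ∈ s → a = b) :
    #s ≤ Fintype.card α * (Fintype.card α + 1) / 2 := by
  set c := Fintype.card α
  set t := s.map (Equiv.prodComm α α).toEmbedding
  have hinter : s ∩ t ⊆ (univ : Finset α).diag := by
    intro p hp
    obtain ⟨hps, hpt⟩ := mem_inter.1 hp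
    obtain ⟨⟨b, a⟩, hba, rfl⟩ := mem_map.1 hpt
    simp [hs a b hps hba]
  have hdiag : #(s ∩ t) ≤ c := by simpa using card_le_card hinter
  have hunion : #(s ∪ t) ≤ c * c := by simpa using card_le_univ (s ∪ t)
  have hsum := card_union_add_card_inter s t
  rw [card_map] at hsum
  rw [Nat.le_div_iff_mul_le two_pos]
  nlinarith

section Dynamics

variable {f : ℕ → ℕ} {n : ℕ}

theorem eq_of_iterate_eq_of_iterate_eq (hper : periodicPts f ⊆ {0}) {x y a b : ℕ} (hx : x ≠ 0)
    (ha : f^[a] x = y) (hb : f^[b] y = x) : x = y := by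
  have hxx : IsPeriodicPt f (b + a) x := by
    rw [IsPeriodicPt, IsFixedPt, iterate_add_apply, ha, hb]
  rcases Nat.eq_zero_or_pos (b + a) with hab | hab
  · rw [← ha, show a = 0 by omega, iterate_zero_apply]
  · exact absurd (hper (mk_mem_periodicPts hab hxx)) hx

theorem injOn_iterate_of_ne_zero (hper : periodicPts f ⊆ {0}) {x K : ℕ}
    (hK : ∀ k < K, f^[k] x ≠ 0) : Set.InjOn (f^[·] x) (Set.Iio K) := by
  suffices ∀ i j, i < K → j < K → i ≤ j → f^[i] x = f^[j] x → i = j by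
    intro i hi j hj hij
    rcases le_total i j with h | h
    exacts [this i j hi hj h hij, (this j i hj hi h hij.symm).symm]
  intro i j hi _ hle hij
  have hper' : IsPeriodicPt f (j - i) (f^[i] x) := by
    rw [IsPeriodicPt, IsFixedPt, ← iterate_add_apply, Nat.sub_add_cancel hle, hij]
  by_contra hne
  exact hK i hi (hper (mk_mem_periodicPts (by omega) hper'))

theorem iterate_le (hle : ∀ x, f x ≤ n) {x : ℕ} (hx : x ≤ n) : ∀ k, f^[k] x ≤ n
  | 0 => hx
  | k + 1 => by rw [iterate_succ_apply']; exact hle _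

theorem le_of_forall_iterate_ne_zero (hle : ∀ x, f x ≤ n) (hper : periodicPts f ⊆ {0})
    {x K : ℕ} (hx : x ≤ n) (hK : ∀ k < K, f^[k] x ≠ 0) : K ≤ n := by
  have hmaps : Set.MapsTo (f^[·] x) (range K) (Icc 1 n) := by
    intro k hk
    exact mem_Icc.2 ⟨Nat.one_le_iff_ne_zero.2 (hK k (mem_range.1 hk)), iterate_le hle hx k⟩
  simpa using card_le_card_of_injOn _ hmaps
    (by simpa using injOn_iterate_of_ne_zero hper hK)

theorem iterate_self_eq_zero (hle : ∀ x, f x ≤ n) (h0 : f 0 = 0) (hper : periodicPts f ⊆ {0})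
    {x : ℕ} (hx : x ≤ n) : f^[n] x = 0 := by
  by_contra hne
  have hK : ∀ k < n + 1, f^[k] x ≠ 0 := fun k hk hk0 => hne <| by
    rw [← Nat.sub_add_cancel (Nat.lt_succ_iff.1 hk), iterate_add_apply, hk0, iterate_fixed h0]
  exact absurd (le_of_forall_iterate_ne_zero hle hper hx hK) (by omega)

theorem iterate_ne_zero_iff_lt_hgt (hle : ∀ x, f x ≤ n) (h0 : f 0 = 0)
    (hper : periodicPts f ⊆ {0}) {x : ℕ} (hx0 : x ≠ 0) (hx : x ≤ n) (k : ℕ) :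
    f^[k] x ≠ 0 ↔ k < hgt f x := by
  have hmem : n ∈ {k | 1 ≤ k ∧ f^[k] x = 0} := ⟨by omega, iterate_self_eq_zero hle h0 hper hx⟩
  obtain ⟨-, hhgt⟩ : 1 ≤ hgt f x ∧ f^[hgt f x] x = 0 := Nat.sInf_mem ⟨n, hmem⟩
  constructor
  · intro hk
    by_contra hge
    rw [← Nat.sub_add_cancel (not_lt.1 hge), iterate_add_apply, hhgt, iterate_fixed h0] at hk
    exact hk rfl
  · intro hk hk0
    have : k ≠ 0 := by rintro rfl; exact hx0 hk0
    exact Nat.notMem_of_lt_sInf hk ⟨by omega, hk0⟩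

theorem hgt_le (hle : ∀ x, f x ≤ n) (h0 : f 0 = 0) (hper : periodicPts f ⊆ {0}) {x : ℕ}
    (hx0 : x ≠ 0) (hx : x ≤ n) : hgt f x ≤ n :=
  le_of_forall_iterate_ne_zero hle hper hx fun _ hk =>
    (iterate_ne_zero_iff_lt_hgt hle h0 hper hx0 hx _).2 hk

theorem card_orbit_eq_hgt (hle : ∀ x, f x ≤ n) (h0 : f 0 = 0) (hper : periodicPts f ⊆ {0})
    {x : ℕ} (hx0 : x ≠ 0) (hx : x ≤ n) :
    #{y ∈ Icc 1 n | ∃ k < n, f^[k] x = y} = hgt f x := by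
  have hiff := iterate_ne_zero_iff_lt_hgt hle h0 hper hx0 hx
  have horbit : {y ∈ Icc 1 n | ∃ k < n, f^[k] x = y} = (range (hgt f x)).image (f^[·] x) := by
    ext y
    simp only [mem_filter, mem_Icc, mem_image, mem_range]
    constructor
    · rintro ⟨⟨hy1, -⟩, k, -, rfl⟩
      exact ⟨k, (hiff k).1 (by omega), rfl⟩
    · rintro ⟨k, hk, rfl⟩
      refine ⟨⟨Nat.one_le_iff_ne_zero.2 ((hiff k).2 hk), iterate_le hle hx k⟩, k, ?_, rfl⟩
      exact hk.trans_le (hgt_le hle h0 hper hx0 hx)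
  rw [horbit, card_image_of_injOn, card_range]
  simpa using injOn_iterate_of_ne_zero hper fun k hk => (hiff k).2 hk

end Dynamics

section LocalFun

variable (φ : ℕ → ℕ) (n : ℕ)

theorem localFun_zero : localFun φ n 0 = 0 := by simp [localFun]

theorem localFun_le (x : ℕ) : localFun φ n x ≤ n := by unfold localFun; split <;> omega

variable {φ n} in
theorem periodicPts_localFun_subset
    (hnc : ∀ x m, 1 ≤ x → x ≤ n → 2 ≤ m → (localFun φ n)^[m] x ≠ x) :
    periodicPts (localFun φ n) ⊆ {0} := by
  rintro x ⟨m, hm, hx⟩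
  have hxn : x ≤ n := by
    rw [← hx.eq, ← Nat.sub_add_cancel hm, iterate_succ_apply']
    exact localFun_le φ n _
  by_contra hx0
  exact hnc x (m * 2) (Nat.one_le_iff_ne_zero.2 hx0) hxn (by omega) (hx.mul_const 2)

theorem Mloc_pow_apply (k : ℕ) (i j : Fin n) :
    (Mloc φ n ^ k) i j = if (localFun φ n)^[k] (j + 1) = i + 1 then 1 else 0 := by
  induction k generalizing j with
  | zero => simp [Matrix.one_apply, Fin.ext_iff, eq_comm]
  | succ k ih =>
    rw [pow_succ, Matrix.mul_apply]
    simp only [ih]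
    simp only [Mloc, mul_ite, mul_one, mul_zero]
    rw [Fin.sum_univ_add_one_eq_sum_Icc n fun l =>
        if localFun φ n (j + 1) = l then if (localFun φ n)^[k] l = i + 1 then 1 else 0 else 0,
      sum_ite_eq, iterate_succ_apply]
    by_cases hy : localFun φ n (j + 1) = 0
    · simp [hy, iterate_fixed (localFun_zero φ n)]
    · rw [if_pos (mem_Icc.2 ⟨Nat.one_le_iff_ne_zero.2 hy, localFun_le φ n _⟩)]

end LocalFun

def reachPairs (f : ℕ → ℕ) (n : ℕ) : Finset (Fin n × Fin n) :=
  {p | ∃ k < n, f^[k] (p.2 + 1) = p.1 + 1}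

section Reach

variable {f : ℕ → ℕ} {n : ℕ}

theorem reachPairs_antisymm (hper : periodicPts f ⊆ {0}) (a b : Fin n)
    (hab : (a, b) ∈ reachPairs f n) (hba : (b, a) ∈ reachPairs f n) : a = b := by
  obtain ⟨k, -, hk⟩ : ∃ k < n, f^[k] (b + 1) = a + 1 := (mem_filter.1 hab).2
  obtain ⟨l, -, hl⟩ : ∃ l < n, f^[l] (a + 1) = b + 1 := (mem_filter.1 hba).2
  have := eq_of_iterate_eq_of_iterate_eq hper (Nat.succ_ne_zero b) hk hl
  exact (Fin.ext (by omega)).symm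

theorem card_reachPairs (hle : ∀ x, f x ≤ n) (h0 : f 0 = 0) (hper : periodicPts f ⊆ {0}) :
    #(reachPairs f n) = ∑ x ∈ Icc 1 n, hgt f x := by
  have hcol (j : Fin n) : #{i : Fin n | ∃ k < n, f^[k] (j + 1) = i + 1} = hgt f (j + 1) := by
    rw [Fin.card_filter_add_one_eq n (fun y => ∃ k < n, f^[k] (j + 1) = y)]
    exact card_orbit_eq_hgt hle h0 hper (Nat.succ_ne_zero _) j.isLt
  rw [reachPairs, card_filter, Fintype.sum_prod_type_right]
  simp only [← card_filter, hcol]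
  exact Fin.sum_univ_add_one_eq_sum_Icc n (hgt f)

end Reach

section Inverse

variable {φ : ℕ → ℕ} {n : ℕ}

theorem Mloc_pow_self (hper : periodicPts (localFun φ n) ⊆ {0}) : Mloc φ n ^ n = 0 := by
  ext i j
  simp [Mloc_pow_apply, iterate_self_eq_zero (localFun_le φ n) (localFun_zero φ n) hper j.isLt]

theorem inv_one_sub_Mloc (hper : periodicPts (localFun φ n) ⊆ {0}) :
    (1 - Mloc φ n)⁻¹ = ∑ k ∈ range n, Mloc φ n ^ k :=
  Matrix.inv_eq_left_inv (by rw [geom_sum_mul_neg, Mloc_pow_self hper, sub_zero])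

theorem inv_one_sub_Mloc_apply_ne_zero_iff (hper : periodicPts (localFun φ n) ⊆ {0})
    (i j : Fin n) :
    (1 - Mloc φ n)⁻¹ i j ≠ 0 ↔ ∃ k < n, (localFun φ n)^[k] (j + 1) = i + 1 := by
  rw [inv_one_sub_Mloc hper, Matrix.sum_apply]
  simp only [Mloc_pow_apply]
  rw [sum_boole, Nat.cast_ne_zero, card_ne_zero, filter_nonempty_iff]
  simp

end Inverse

theorem stmt16_general (φ : ℕ → ℕ)
    (n : ℕ)
    (hnc : ∀ x m, 1 ≤ x → x ≤ n → 2 ≤ m → (localFun φ n)^[m] x ≠ x) :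
    (Finset.univ.filter
        (fun p : Fin n × Fin n => (1 - Mloc φ n)⁻¹ p.1 p.2 ≠ 0)).card =
      ∑ x ∈ Finset.Icc 1 n, hgt (localFun φ n) x ∧
    ∑ x ∈ Finset.Icc 1 n, hgt (localFun φ n) x ≤ n * (n + 1) / 2 := by
  have hper := periodicPts_localFun_subset hnc
  have hsupp : Finset.univ.filter (fun p : Fin n × Fin n => (1 - Mloc φ n)⁻¹ p.1 p.2 ≠ 0) =
      reachPairs (localFun φ n) n :=
    filter_congr fun p _ => inv_one_sub_Mloc_apply_ne_zero_iff hper p.1 p.2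
  rw [hsupp, ← card_reachPairs (localFun_le φ n) (localFun_zero φ n) hper]
  refine ⟨rfl, ?_⟩
  simpa using card_le_of_antisymm _ (reachPairs_antisymm hper)

theorem stmt16 (φ : ℕ → ℕ) (hφ0 : φ 0 = 0) (hfix : ∀ x, 1 ≤ x → φ x ≠ x)
    (n : ℕ) (hn : 2 ≤ n)
    (hnc : ∀ x m, 1 ≤ x → x ≤ n → 2 ≤ m → (localFun φ n)^[m] x ≠ x) :
    (Finset.univ.filter
        (fun p : Fin n × Fin n => (1 - Mloc φ n)⁻¹ p.1 p.2 ≠ 0)).card =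
      ∑ x ∈ Finset.Icc 1 n, hgt (localFun φ n) x ∧
    ∑ x ∈ Finset.Icc 1 n, hgt (localFun φ n) x ≤ n * (n + 1) / 2 :=
  stmt16_general φ n hnc
end

section
/- Let φ ∈ Φ, n ≥ 2, with φ_n having no cycle. Then the j-th column v_j of (I − M_n(φ))^{-1} equals e_j + ∑_{ν=1}^{h(j)−1} e_{φ_n^ν(j)} for each 1 ≤ j ≤ n, where h(j) is the height of j. -/
/-!
`M_n(φ)` sends `e_x` to `e_{φ_n(x)}` for every `x`, once `e_x` is read as `0` outside
`{1, …, n}`. Hence `(1 - M)` applied to `∑_{ν < h} e_{φ_n^ν(j)}` telescopes to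
`e_j - e_{φ_n^h(j)} = e_j` as soon as `φ_n^h(j) = 0`. Such an `h ≥ 1` exists because the orbit
of `j` cannot stay in the finite set `{1, …, n}` without closing a cycle.
-/

open Finset Function Matrix

theorem Function.exists_iterate_eq_of_mapsTo_insert {α : Type*} {f : α → α} {s : Set α} {a : α}
    (hs : s.Finite) (hf : Set.MapsTo f s (insert a s))
    (hper : ∀ x ∈ s, ∀ m, 0 < m → ¬ IsPeriodicPt f m x) {x : α} (hx : x ∈ s) :
    ∃ k, 1 ≤ k ∧ f^[k] x = a := by
  by_contra! hne
  have orbit_mem : ∀ k, f^[k] x ∈ s := by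
    intro k
    induction k with
    | zero => exact hx
    | succ k ih =>
      rw [iterate_succ_apply']
      exact (hf ih).resolve_left (iterate_succ_apply' f k x ▸ hne (k + 1) k.succ_pos)
  obtain ⟨p, q, hpq, heq⟩ := hs.exists_lt_map_eq_of_forall_mem orbit_mem
  refine hper _ (orbit_mem p) (q - p) (Nat.sub_pos_of_lt hpq) ?_
  rw [IsPeriodicPt, IsFixedPt, ← iterate_add_apply, Nat.sub_add_cancel hpq.le, heq]

theorem Matrix.one_sub_mulVec_sum_iterate {ι R α : Type*} [Fintype ι] [DecidableEq ι] [Ring R]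
    {M : Matrix ι ι R} {v : α → ι → R} {f : α → α} (hv : ∀ x, M *ᵥ v x = v (f x))
    (x : α) (h : ℕ) :
    (1 - M) *ᵥ ∑ ν ∈ range h, v (f^[ν] x) = v x - v (f^[h] x) := by
  simp only [sub_mulVec, one_mulVec, mulVec_sum, hv, ← iterate_succ_apply' f]
  exact sum_range_sub' (fun ν => v (f^[ν] x)) h

theorem Finset.sum_range_eq_add_sum_Icc {M : Type*} [AddCommMonoid M] (g : ℕ → M) {h : ℕ}
    (hh : 1 ≤ h) : ∑ ν ∈ range h, g ν = g 0 + ∑ ν ∈ Icc 1 (h - 1), g ν := by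
  obtain ⟨h, rfl⟩ := Nat.exists_eq_add_of_le' hh
  rw [sum_range_succ', add_comm, Nat.add_sub_cancel, ← Ico_add_one_right_eq_Icc,
    sum_Ico_eq_sum_range]
  simp [add_comm]

theorem hgt_spec {f : ℕ → ℕ} {x : ℕ} (h : ∃ k, 1 ≤ k ∧ f^[k] x = 0) :
    1 ≤ hgt f x ∧ f^[hgt f x] x = 0 :=
  Nat.sInf_mem h

section localFun

variable {φ : ℕ → ℕ} {n : ℕ}

theorem localFun_of_not_mem {x : ℕ} (hx : x ∉ Set.Icc 1 n) : localFun φ n x = 0 := by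
  simp_all [localFun]

theorem localFun_mapsTo : Set.MapsTo (localFun φ n) (Set.Icc 1 n) (insert 0 (Set.Icc 1 n)) := by
  intro x _
  unfold localFun
  split_ifs with h
  · exact Or.inr ⟨h.2.2.1, h.2.2.2⟩
  · exact Or.inl rfl

theorem localFun_ne_self (hfix : ∀ x, 1 ≤ x → φ x ≠ x) {x : ℕ} (hx : 1 ≤ x) :
    localFun φ n x ≠ x := by
  unfold localFun
  split_ifs
  · exact hfix x hx
  · omega

theorem localFun_not_isPeriodicPt (hfix : ∀ x, 1 ≤ x → φ x ≠ x)
    (hnc : ∀ x m, 1 ≤ x → x ≤ n → 2 ≤ m → (localFun φ n)^[m] x ≠ x) :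
    ∀ x ∈ Set.Icc 1 n, ∀ m, 0 < m → ¬ IsPeriodicPt (localFun φ n) m x := by
  rintro x ⟨hx1, hxn⟩ m hm
  obtain rfl | hm2 : m = 1 ∨ 2 ≤ m := by omega
  · exact localFun_ne_self hfix hx1
  · exact hnc x m hx1 hxn hm2

end localFun

/-- `e_x ∈ ℤⁿ` for `1 ≤ x ≤ n`, and `0` for every other `x`. -/
def stdVec (n x : ℕ) : Fin n → ℤ := fun i => if x = (i : ℕ) + 1 then 1 else 0

theorem stdVec_of_not_mem {n x : ℕ} (hx : x ∉ Set.Icc 1 n) : stdVec n x = 0 := by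
  ext i
  simp only [Set.mem_Icc] at hx
  simp only [stdVec, Pi.zero_apply, ite_eq_right_iff, one_ne_zero, imp_false]
  omega

theorem one_apply_eq_stdVec {n : ℕ} (i j : Fin n) : (1 : Matrix (Fin n) (Fin n) ℤ) i j =
    stdVec n ((j : ℕ) + 1) i := by
  simp [one_apply, stdVec, Fin.ext_iff, eq_comm]

theorem Mloc_mulVec_stdVec (φ : ℕ → ℕ) (n x : ℕ) :
    Mloc φ n *ᵥ stdVec n x = stdVec n (localFun φ n x) := by
  by_cases hx : x ∈ Set.Icc 1 n
  · obtain ⟨m, rfl⟩ : ∃ m, x = m + 1 := Nat.exists_eq_add_one.mpr hx.1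
    have hm : m < n := hx.2
    ext i
    rw [mulVec, dotProduct, sum_eq_single ⟨m, hm⟩]
    · simp [Mloc, stdVec]
    · intro k _ hk
      rw [stdVec, if_neg (fun h => hk (Fin.ext (Nat.add_right_cancel h).symm)), mul_zero]
    · simp
  · rw [stdVec_of_not_mem hx, localFun_of_not_mem hx, mulVec_zero, stdVec_of_not_mem (by simp)]

theorem stmt17_general (φ : ℕ → ℕ) (hfix : ∀ x, 1 ≤ x → φ x ≠ x)
    (n : ℕ)
    (hnc : ∀ x m, 1 ≤ x → x ≤ n → 2 ≤ m → (localFun φ n)^[m] x ≠ x) :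
    ∀ i j : Fin n,
      (1 - Mloc φ n)⁻¹ i j =
        (if i = j then 1 else 0) +
          ∑ ν ∈ Finset.Icc 1 (hgt (localFun φ n) ((j : ℕ) + 1) - 1),
            (if (localFun φ n)^[ν] ((j : ℕ) + 1) = (i : ℕ) + 1 then (1 : ℤ) else 0) := by
  set f := localFun φ n
  have height (j : Fin n) : 1 ≤ hgt f (j + 1) ∧ f^[hgt f (j + 1)] (j + 1) = 0 :=
    hgt_spec <| exists_iterate_eq_of_mapsTo_insert (Set.finite_Icc 1 n) localFun_mapsTo
      (localFun_not_isPeriodicPt hfix hnc) ⟨by omega, j.isLt⟩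
  set column : Fin n → Fin n → ℤ := fun j =>
    ∑ ν ∈ range (hgt f (j + 1)), stdVec n (f^[ν] (j + 1)) with column_def
  have column_spec (j : Fin n) : (1 - Mloc φ n) *ᵥ column j = stdVec n (j + 1) := by
    rw [one_sub_mulVec_sum_iterate (Mloc_mulVec_stdVec φ n), (height j).2,
      stdVec_of_not_mem (x := 0) (by simp), sub_zero]
  have hinv : (1 - Mloc φ n) * (of column)ᵀ = 1 := by
    ext i j
    rw [one_apply_eq_stdVec, ← column_spec]
    rfl
  intro i j
  rw [inv_eq_right_inv hinv, transpose_apply, of_apply]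
  simp only [column_def, Finset.sum_apply]
  rw [sum_range_eq_add_sum_Icc _ (height j).1, iterate_zero_apply,
    ← one_apply_eq_stdVec, one_apply]
  rfl

theorem stmt17 (φ : ℕ → ℕ) (hφ0 : φ 0 = 0) (hfix : ∀ x, 1 ≤ x → φ x ≠ x)
    (n : ℕ) (hn : 2 ≤ n)
    (hnc : ∀ x m, 1 ≤ x → x ≤ n → 2 ≤ m → (localFun φ n)^[m] x ≠ x) :
    ∀ i j : Fin n,
      (1 - Mloc φ n)⁻¹ i j =
        (if i = j then 1 else 0) +
          ∑ ν ∈ Finset.Icc 1 (hgt (localFun φ n) ((j : ℕ) + 1) - 1),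
            (if (localFun φ n)^[ν] ((j : ℕ) + 1) = (i : ℕ) + 1 then (1 : ℤ) else 0) :=
  stmt17_general φ hfix n hnc
end
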